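/- arXiv:2003.08186 — 9 statements merged into one kernel-verified Lean document; each statement's English description precedes it below -/
import Mathlib

section
/- If a bounded linear operator T on a Banach space X can be embedded into a C_0-semigroup (i.e., there exists a strongly continuous semigroup (T(t))_{t≥0} with T(1)=T), then dim(ker T) is either zero or infinite, and codim(range T) is either zero or infinite. -/
/-!
For `r ∈ (0, 1]` the kernels `ker S(r)` increase with `r` and the ranges `range S(r)` decrease
with `r`. If `ker T = ker S(1)` is finite-dimensional, the kernels form a monotone family in an
Artinian module, so they are constant on some `(0, t₀]`; a vector in that common kernel is the
limit of `S(r) x = 0` as `r → 0⁺`, so the common kernel is trivial, and since `S(n t₀) = S(t₀)ⁿ`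
with `n t₀ ≥ 1`, `T` is injective. Dually, if `range T` has finite codimension, the ranges are
constant on some `(0, t₀]`; the common range contains `S(r) x → x`, so it is dense, and it is
closed since a bounded operator between Banach spaces with finite-codimensional range has closed
range. Hence `S(t₀)` and then `T` are surjective.
-/

open Cardinal Set Filter Topology

theorem exists_forall_le_eq_of_monotoneOn {α β : Type*} [Preorder α] [PartialOrder β]
    [WellFoundedLT β] {f : α → β} {s : Set α} (hs : s.Nonempty) (hf : MonotoneOn f s) :
    ∃ t₀ ∈ s, ∀ t ∈ s, t ≤ t₀ → f t = f t₀ := by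
  obtain ⟨_, ⟨t₀, ht₀, rfl⟩, hmin⟩ := wellFounded_lt.has_min (f '' s) (hs.image f)
  exact ⟨t₀, ht₀, fun t ht hle => (hf ht ht₀ hle).eq_of_not_lt (hmin _ ⟨t, ht, rfl⟩)⟩

namespace Submodule

variable {α R M : Type*} [Preorder α] [Ring R] [AddCommGroup M] [Module R M]
  {f : α → Submodule R M} {s : Set α} {a : α}

theorem exists_forall_le_eq_of_monotoneOn [IsArtinian R (f a)] (ha : a ∈ s)
    (hfa : ∀ t ∈ s, f t ≤ f a) (hf : MonotoneOn f s) :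
    ∃ t₀ ∈ s, ∀ t ∈ s, t ≤ t₀ → f t = f t₀ := by
  have hmono : MonotoneOn (fun t => (f t).comap (f a).subtype) s :=
    fun t ht t' ht' h => comap_mono (hf ht ht' h)
  obtain ⟨t₀, ht₀, hconst⟩ := _root_.exists_forall_le_eq_of_monotoneOn ⟨a, ha⟩ hmono
  refine ⟨t₀, ht₀, fun t ht hle => ?_⟩
  have h := congrArg (map (f a).subtype) (hconst t ht hle)
  simp only [map_comap_subtype, inf_of_le_right (hfa t ht), inf_of_le_right (hfa t₀ ht₀)] at h
  exact h

theorem exists_forall_le_eq_of_antitoneOn [IsNoetherian R (M ⧸ f a)] (ha : a ∈ s)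
    (hfa : ∀ t ∈ s, f a ≤ f t) (hf : AntitoneOn f s) :
    ∃ t₀ ∈ s, ∀ t ∈ s, t ≤ t₀ → f t = f t₀ := by
  have hmono : MonotoneOn (fun t => OrderDual.toDual ((f t).map (f a).mkQ)) s :=
    fun t ht t' ht' h => map_mono (hf ht ht' h)
  obtain ⟨t₀, ht₀, hconst⟩ := _root_.exists_forall_le_eq_of_monotoneOn ⟨a, ha⟩ hmono
  refine ⟨t₀, ht₀, fun t ht hle => ?_⟩
  have h := congrArg (comap (f a).mkQ) (OrderDual.toDual.injective (hconst t ht hle))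
  simp only [comap_map_mkQ, sup_of_le_right (hfa t ht), sup_of_le_right (hfa t₀ ht₀)] at h
  exact h

end Submodule

/-- For an algebraic complement `C` of `range f`, the complement of `range f` is the image of the
open set `E × (C \ {0})` under the surjection `(x, v) ↦ f x + v`, an open map by Banach's open
mapping theorem. -/
theorem ContinuousLinearMap.isClosed_range_of_finiteDimensional_quotient {𝕜 E F : Type*}
    [NontriviallyNormedField 𝕜] [CompleteSpace 𝕜] [NormedAddCommGroup E] [NormedSpace 𝕜 E]
    [CompleteSpace E] [NormedAddCommGroup F] [NormedSpace 𝕜 F] [CompleteSpace F]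
    (f : E →L[𝕜] F) [FiniteDimensional 𝕜 (F ⧸ LinearMap.range (f : E →ₗ[𝕜] F))] :
    IsClosed (LinearMap.range (f : E →ₗ[𝕜] F) : Set F) := by
  set R := LinearMap.range (f : E →ₗ[𝕜] F)
  obtain ⟨C, hRC⟩ := Submodule.exists_isCompl R
  have : FiniteDimensional 𝕜 C := Module.Finite.equiv (Submodule.quotientEquivOfIsCompl R C hRC)
  have : CompleteSpace C := FiniteDimensional.complete 𝕜 C
  set G : E × C →L[𝕜] F := f.coprod C.subtypeL
  have hG : Function.Surjective G := by
    intro y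
    obtain ⟨_, ⟨x, rfl⟩, v, hv, hy⟩ :=
      Submodule.mem_sup.1 (hRC.sup_eq_top ▸ Submodule.mem_top (x := y))
    exact ⟨(x, ⟨v, hv⟩), hy⟩
  have hcompl : (R : Set F)ᶜ = G '' (Set.univ ×ˢ {0}ᶜ) := by
    ext y
    constructor
    · intro hy
      obtain ⟨⟨x, v⟩, rfl⟩ := hG y
      refine ⟨(x, v), ⟨trivial, fun hv => hy ?_⟩, rfl⟩
      obtain rfl : v = 0 := hv
      simp only [G, ContinuousLinearMap.coprod_apply, map_zero, add_zero]
      exact ⟨x, rfl⟩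
    · rintro ⟨⟨x, v⟩, ⟨-, hv⟩, rfl⟩ hy
      have hvR : (v : F) ∈ R := by
        simpa [G] using R.sub_mem hy (LinearMap.mem_range_self (f : E →ₗ[𝕜] F) x)
      exact hv (Subtype.ext (Submodule.disjoint_def.1 hRC.disjoint _ hvR v.2))
  rw [← isOpen_compl_iff, hcompl]
  exact G.isOpenMap hG _ (isOpen_univ.prod isOpen_compl_singleton)

namespace OperatorSemigroup

section Module

variable {R M : Type*} [Ring R] [AddCommGroup M] [Module R M] [TopologicalSpace M]
  {S : ℝ → M →L[R] M}

theorem ker_mono (hSadd : ∀ t s : ℝ, 0 ≤ t → 0 ≤ s → S (t + s) = S t ∘L S s)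
    {s t : ℝ} (hs : 0 ≤ s) (hst : s ≤ t) :
    LinearMap.ker (S s : M →ₗ[R] M) ≤ LinearMap.ker (S t : M →ₗ[R] M) := by
  rw [← sub_add_cancel t s, hSadd _ _ (sub_nonneg.2 hst) hs, ContinuousLinearMap.toLinearMap_comp]
  exact LinearMap.ker_le_ker_comp _ _

theorem range_anti (hSadd : ∀ t s : ℝ, 0 ≤ t → 0 ≤ s → S (t + s) = S t ∘L S s)
    {s t : ℝ} (hs : 0 ≤ s) (hst : s ≤ t) :
    LinearMap.range (S t : M →ₗ[R] M) ≤ LinearMap.range (S s : M →ₗ[R] M) := by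
  rw [← add_sub_cancel s t, hSadd _ _ hs (sub_nonneg.2 hst), ContinuousLinearMap.toLinearMap_comp]
  exact LinearMap.range_comp_le_range _ _

theorem map_nat_mul (hS0 : S 0 = 1)
    (hSadd : ∀ t s : ℝ, 0 ≤ t → 0 ≤ s → S (t + s) = S t ∘L S s)
    {t : ℝ} (ht : 0 ≤ t) (n : ℕ) : S (n * t) = S t ^ n := by
  induction n with
  | zero => simpa using hS0
  | succ n ih =>
    rw [Nat.cast_succ, add_one_mul, add_comm, hSadd _ _ ht (by positivity), ih, pow_succ']
    rfl

theorem ker_eq_bot_of_ker_eq_bot (hS0 : S 0 = 1)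
    (hSadd : ∀ t s : ℝ, 0 ≤ t → 0 ≤ s → S (t + s) = S t ∘L S s) {t₀ t : ℝ} (ht₀ : 0 < t₀)
    (h : LinearMap.ker (S t₀ : M →ₗ[R] M) = ⊥) (ht : 0 ≤ t) :
    LinearMap.ker (S t : M →ₗ[R] M) = ⊥ := by
  obtain ⟨n, hn⟩ := Archimedean.arch t ht₀
  rw [nsmul_eq_mul] at hn
  refine eq_bot_iff.2 ((ker_mono hSadd ht hn).trans (eq_bot_iff.1 ?_))
  rw [LinearMap.ker_eq_bot, ContinuousLinearMap.coe_coe, map_nat_mul hS0 hSadd ht₀.le,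
    FunLike.coe_pow_eq_iterate]
  exact (LinearMap.ker_eq_bot.1 h).iterate n

theorem range_eq_top_of_range_eq_top (hS0 : S 0 = 1)
    (hSadd : ∀ t s : ℝ, 0 ≤ t → 0 ≤ s → S (t + s) = S t ∘L S s) {t₀ t : ℝ} (ht₀ : 0 < t₀)
    (h : LinearMap.range (S t₀ : M →ₗ[R] M) = ⊤) (ht : 0 ≤ t) :
    LinearMap.range (S t : M →ₗ[R] M) = ⊤ := by
  obtain ⟨n, hn⟩ := Archimedean.arch t ht₀
  rw [nsmul_eq_mul] at hn
  refine eq_top_iff.2 ((eq_top_iff.1 ?_).trans (range_anti hSadd ht hn))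
  rw [LinearMap.range_eq_top, ContinuousLinearMap.coe_coe, map_nat_mul hS0 hSadd ht₀.le,
    FunLike.coe_pow_eq_iterate]
  exact (LinearMap.range_eq_top.1 h).iterate n

theorem tendsto_nhdsGT_zero (hS0 : S 0 = 1)
    (hScont : ∀ x : M, ContinuousOn (fun t : ℝ => S t x) (Set.Ici 0)) (x : M) :
    Tendsto (fun t : ℝ => S t x) (𝓝[>] 0) (𝓝 x) := by
  have h := (hScont x 0 self_mem_Ici).tendsto
  rw [hS0, one_apply_eq_self] at h
  exact h.mono_left (nhdsWithin_mono 0 Ioi_subset_Ici_self)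

theorem ker_eq_bot_of_isArtinian [T1Space M] (hS0 : S 0 = 1)
    (hSadd : ∀ t s : ℝ, 0 ≤ t → 0 ≤ s → S (t + s) = S t ∘L S s)
    (hScont : ∀ x : M, ContinuousOn (fun t : ℝ => S t x) (Set.Ici 0)) {t : ℝ} (ht : 0 < t)
    [IsArtinian R (LinearMap.ker (S t : M →ₗ[R] M))] :
    LinearMap.ker (S t : M →ₗ[R] M) = ⊥ := by
  obtain ⟨t₀, ht₀, hconst⟩ :=
    Submodule.exists_forall_le_eq_of_monotoneOn (f := fun r => LinearMap.ker (S r : M →ₗ[R] M))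
      (s := Ioc 0 t) ⟨ht, le_rfl⟩ (fun r hr => ker_mono hSadd hr.1.le hr.2)
      (fun r hr _ _ hrr' => ker_mono hSadd hr.1.le hrr')
  refine ker_eq_bot_of_ker_eq_bot hS0 hSadd ht₀.1 (eq_bot_iff.2 fun x hx => ?_) ht.le
  have hvanish : ∀ᶠ r in 𝓝[>] 0, S r x ∈ ({0} : Set M) := by
    filter_upwards [Ioc_mem_nhdsGT ht₀.1] with r hr
    rw [← hconst r ⟨hr.1, hr.2.trans ht₀.2⟩ hr.2] at hx
    exact hx
  simpa using mem_closure_of_tendsto (tendsto_nhdsGT_zero hS0 hScont x) hvanish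

end Module

section Banach

variable {𝕜 X : Type*} [NontriviallyNormedField 𝕜] [CompleteSpace 𝕜] [NormedAddCommGroup X]
  [NormedSpace 𝕜 X] [CompleteSpace X] {S : ℝ → X →L[𝕜] X}

theorem range_eq_top_of_finiteDimensional_quotient (hS0 : S 0 = 1)
    (hSadd : ∀ t s : ℝ, 0 ≤ t → 0 ≤ s → S (t + s) = S t ∘L S s)
    (hScont : ∀ x : X, ContinuousOn (fun t : ℝ => S t x) (Set.Ici 0)) {t : ℝ} (ht : 0 < t)
    [FiniteDimensional 𝕜 (X ⧸ LinearMap.range (S t : X →ₗ[𝕜] X))] :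
    LinearMap.range (S t : X →ₗ[𝕜] X) = ⊤ := by
  obtain ⟨t₀, ht₀, hconst⟩ :=
    Submodule.exists_forall_le_eq_of_antitoneOn (f := fun r => LinearMap.range (S r : X →ₗ[𝕜] X))
      (s := Ioc 0 t) ⟨ht, le_rfl⟩ (fun r hr => range_anti hSadd hr.1.le hr.2)
      (fun r hr _ _ hrr' => range_anti hSadd hr.1.le hrr')
  have : FiniteDimensional 𝕜 (X ⧸ LinearMap.range (S t₀ : X →ₗ[𝕜] X)) :=
    Module.Finite.of_surjective _ (Submodule.factor_surjective (range_anti hSadd ht₀.1.le ht₀.2))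
  refine range_eq_top_of_range_eq_top hS0 hSadd ht₀.1 (eq_top_iff.2 fun x _ => ?_) ht.le
  have hmem : ∀ᶠ r in 𝓝[>] 0, S r x ∈ (LinearMap.range (S t₀ : X →ₗ[𝕜] X) : Set X) := by
    filter_upwards [Ioc_mem_nhdsGT ht₀.1] with r hr
    rw [← hconst r ⟨hr.1, hr.2.trans ht₀.2⟩ hr.2]
    exact LinearMap.mem_range_self _ x
  rw [← SetLike.mem_coe, ← (S t₀).isClosed_range_of_finiteDimensional_quotient.closure_eq]
  exact mem_closure_of_tendsto (tendsto_nhdsGT_zero hS0 hScont x) hmem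

end Banach

end OperatorSemigroup

/-- If a bounded linear operator `T` on a complex Banach space `X` embeds into a
`C₀`-semigroup, then `dim (ker T)` and `codim (range T)` are each zero or infinite. -/
theorem stmt_0 {X : Type*} [NormedAddCommGroup X] [NormedSpace ℂ X] [CompleteSpace X]
    (T : X →L[ℂ] X) (S : ℝ → X →L[ℂ] X)
    (hS0 : S 0 = 1)
    (hSadd : ∀ t s : ℝ, 0 ≤ t → 0 ≤ s → S (t + s) = S t ∘L S s)
    (hScont : ∀ x : X, ContinuousOn (fun t : ℝ => S t x) (Set.Ici 0))
    (hS1 : S 1 = T) :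
    (Module.rank ℂ (LinearMap.ker (T : X →ₗ[ℂ] X)) = 0 ∨
      ℵ₀ ≤ Module.rank ℂ (LinearMap.ker (T : X →ₗ[ℂ] X))) ∧
    (Module.rank ℂ (X ⧸ LinearMap.range (T : X →ₗ[ℂ] X)) = 0 ∨
      ℵ₀ ≤ Module.rank ℂ (X ⧸ LinearMap.range (T : X →ₗ[ℂ] X))) := by
  subst hS1
  constructor
  · refine or_iff_not_imp_right.2 fun hfin => ?_
    have : FiniteDimensional ℂ (LinearMap.ker (S 1 : X →ₗ[ℂ] X)) :=
      Module.rank_lt_aleph0_iff.1 (not_le.1 hfin)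
    rw [OperatorSemigroup.ker_eq_bot_of_isArtinian hS0 hSadd hScont one_pos, rank_bot]
  · refine or_iff_not_imp_right.2 fun hfin => ?_
    have : FiniteDimensional ℂ (X ⧸ LinearMap.range (S 1 : X →ₗ[ℂ] X)) :=
      Module.rank_lt_aleph0_iff.1 (not_le.1 hfin)
    have := Submodule.Quotient.subsingleton_iff.2 <|
      OperatorSemigroup.range_eq_top_of_finiteDimensional_quotient hS0 hSadd hScont one_pos
    exact rank_subsingleton' _ _
end

section
/- Let S be a bounded linear operator on a Banach space X, d ∈ ℕ, and λ ∈ ℂ \ {0}. Then there exists x ∈ X with (λ² − S²)^d x = 0 and (λ² − S²)^{d−1} x ≠ 0 if and only if there exists y ∈ X with (λ − S)^d y = 0 and (λ − S)^{d−1} y ≠ 0, or there exists z with (−λ − S)^d z = 0 and (−λ − S)^{d−1} z ≠ 0. -/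
/-- Spectral mapping theorem for squares and Jordan blocks: for `λ ≠ 0`, `S²` has a
Jordan block of dimension `d` at `λ²` iff `S` has a Jordan block of dimension `d` at
`λ` or at `-λ`. -/
theorem stmt_5 {X : Type*} [NormedAddCommGroup X] [NormedSpace ℂ X] [CompleteSpace X]
    (S : X →L[ℂ] X) (d : ℕ) (hd : 1 ≤ d) (lam : ℂ) (hlam : lam ≠ 0) :
    (∃ x : X, ((lam ^ 2 • (1 : X →L[ℂ] X) - S ^ 2) ^ d) x = 0 ∧
        ((lam ^ 2 • (1 : X →L[ℂ] X) - S ^ 2) ^ (d - 1)) x ≠ 0) ↔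
      ((∃ y : X, ((lam • (1 : X →L[ℂ] X) - S) ^ d) y = 0 ∧
          ((lam • (1 : X →L[ℂ] X) - S) ^ (d - 1)) y ≠ 0) ∨
        (∃ z : X, (((-lam) • (1 : X →L[ℂ] X) - S) ^ d) z = 0 ∧
          (((-lam) • (1 : X →L[ℂ] X) - S) ^ (d - 1)) z ≠ 0)) := by
  obtain ⟨e, rfl⟩ : ∃ e, d = e + 1 := ⟨d - 1, (Nat.succ_pred_eq_of_pos hd).symm⟩
  simp only [Nat.add_sub_cancel]
  set φ : Polynomial ℂ →ₐ[ℂ] (X →L[ℂ] X) := Polynomial.aeval S with hφ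
  set a : Polynomial ℂ := Polynomial.C lam - Polynomial.X with ha
  set b : Polynomial ℂ := Polynomial.C (-lam) - Polynomial.X with hb
  have hmul : ∀ (p q : Polynomial ℂ) (x : X), φ (p * q) x = φ p (φ q x) := by
    intro p q x; rw [map_mul]; rfl
  have heqa : lam • (1 : X →L[ℂ] X) - S = φ a := by
    simp [ha, hφ, Algebra.algebraMap_eq_smul_one]
  have heqb : (-lam) • (1 : X →L[ℂ] X) - S = φ b := by
    simp [hb, hφ, Algebra.algebraMap_eq_smul_one]
  have hpoly : -(a * b) = Polynomial.C (lam ^ 2) - Polynomial.X ^ 2 := by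
    simp only [ha, hb, map_neg, sq, Polynomial.C_mul]; ring
  have h1 : φ (-(a * b)) = lam ^ 2 • (1 : X →L[ℂ] X) - S ^ 2 := by
    rw [hpoly]; simp [hφ, Algebra.algebraMap_eq_smul_one, smul_pow]
  have hL : ∀ (n : ℕ) (x : X),
      (((lam ^ 2 • (1 : X →L[ℂ] X) - S ^ 2)) ^ n) x = 0 ↔ φ ((a * b) ^ n) x = 0 := by
    intro n x
    rw [← h1, ← map_pow]
    rcases Nat.even_or_odd n with h | h
    · rw [h.neg_pow]
    · rw [h.neg_pow, map_neg]; simp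
  simp only [ne_eq, hL, heqa, heqb, ← map_pow]
  have h2lam : (2 * lam) ≠ 0 := mul_ne_zero two_ne_zero hlam
  have hab : IsCoprime a b := by
    refine ⟨Polynomial.C (2 * lam)⁻¹, -Polynomial.C (2 * lam)⁻¹, ?_⟩
    have key : a - b = Polynomial.C (2 * lam) := by
      rw [two_mul, map_add, ha, hb, map_neg]; ring
    have : Polynomial.C (2 * lam)⁻¹ * a + -Polynomial.C (2 * lam)⁻¹ * b =
        Polynomial.C (2 * lam)⁻¹ * (a - b) := by ring
    rw [this, key, ← Polynomial.C_mul, inv_mul_cancel₀ h2lam, Polynomial.C_1]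
  have aux : ∀ p q : Polynomial ℂ, IsCoprime p q →
      (∃ y : X, φ (p ^ (e + 1)) y = 0 ∧ φ (p ^ e) y ≠ 0) →
      (∃ x : X, φ ((p * q) ^ (e + 1)) x = 0 ∧ φ ((p * q) ^ e) x ≠ 0) := by
    intro p q hpq ⟨y, h1', h2'⟩
    refine ⟨y, ?_, ?_⟩
    · have hr : (p * q) ^ (e + 1) = q ^ (e + 1) * p ^ (e + 1) := by rw [mul_pow]; ring
      rw [hr, hmul, h1', map_zero]
    · intro hcon
      set w := φ (p ^ e) y with hw
      have hw1 : φ p w = 0 := by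
        rw [hw, ← hmul]
        have : p * p ^ e = p ^ (e + 1) := by rw [pow_succ]; ring
        rw [this, h1']
      have hw2 : φ (q ^ e) w = 0 := by
        rw [hw, ← hmul]
        have : q ^ e * p ^ e = (p * q) ^ e := by rw [mul_pow]; ring
        rw [this, hcon]
      obtain ⟨u, v, huv⟩ := hpq.pow_right (n := e)
      have := congrArg (fun r => φ r w) huv
      simp only [map_add, map_mul, map_one, ContinuousLinearMap.add_apply,
        ContinuousLinearMap.mul_apply, hw1, hw2, map_zero, add_zero,
        ContinuousLinearMap.one_apply] at this
      exact h2' this.symm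
  constructor
  · rintro ⟨x, hx1, hx2⟩
    obtain ⟨u, v, huv⟩ := (hab.pow (m := e + 1) (n := e + 1))
    set y := φ (v * b ^ (e + 1)) x with hy
    set z := φ (u * a ^ (e + 1)) x with hz
    have hxyz : y + z = x := by
      rw [hy, hz, ← ContinuousLinearMap.add_apply, ← map_add]
      have : v * b ^ (e + 1) + u * a ^ (e + 1) = 1 := by rw [← huv]; ring
      rw [this, map_one, ContinuousLinearMap.one_apply]
    have hya : φ (a ^ (e + 1)) y = 0 := by
      rw [hy, ← hmul]
      have : a ^ (e + 1) * (v * b ^ (e + 1)) = v * (a * b) ^ (e + 1) := by rw [mul_pow]; ring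
      rw [this, hmul, hx1, map_zero]
    have hzb : φ (b ^ (e + 1)) z = 0 := by
      rw [hz, ← hmul]
      have : b ^ (e + 1) * (u * a ^ (e + 1)) = u * (a * b) ^ (e + 1) := by rw [mul_pow]; ring
      rw [this, hmul, hx1, map_zero]
    have hsplit : φ ((a * b) ^ e) y + φ ((a * b) ^ e) z ≠ 0 := by
      rw [← map_add, hxyz]; exact hx2
    by_cases hy0 : φ ((a * b) ^ e) y = 0
    · right
      have hz0 : φ ((a * b) ^ e) z ≠ 0 := by
        intro h; exact hsplit (by rw [hy0, h, add_zero])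
      refine ⟨z, hzb, ?_⟩
      intro h
      apply hz0
      have : (a * b) ^ e = a ^ e * b ^ e := mul_pow a b e
      rw [this, hmul, h, map_zero]
    · left
      refine ⟨y, hya, ?_⟩
      intro h
      apply hy0
      have : (a * b) ^ e = b ^ e * a ^ e := by rw [mul_pow]; ring
      rw [this, hmul, h, map_zero]
  · rintro (hy | hz)
    · exact aux a b hab hy
    · obtain ⟨x, h1', h2'⟩ := aux b a hab.symm hz
      exact ⟨x, by rwa [mul_comm b a] at h1', by rwa [mul_comm b a] at h2'⟩
end

section
/- Let T be a real bounded operator on the complexification of a real Banach space such that the spectrum of T is contained in ℂ \ (−∞, 0]. Then there exists a real bounded operator A (i.e., A maps real vectors to real vectors) with e^A = T; consequently T embeds into the uniformly continuous real group (e^{tA})_{t∈ℝ}. -/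
/-!
For `t ∈ [0, 1]` the element `γ t = 1 + t (T - 1)` is invertible, because `γ t` is a nonzero
multiple of `(t - 1) / t - T` and `(t - 1) / t ≤ 0`. Hence `A = ∫₀¹ γ' (γ t)⁻¹ dt` (the principal
logarithm of `T`) is defined. Everything in sight commutes with `T`, so `u ↦ exp (∫₀ᵘ γ' γ⁻¹)`
and `γ` solve the same linear equation `y' = γ' γ⁻¹ y` with `y 0 = 1`; therefore `e^A = γ 1 = T`.

Conjugation `B ↦ C B C` by the involution `C` is a continuous real algebra homomorphism, and the
real operators are exactly its fixed points. It commutes with inversion, with integrals and with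
`exp`, and it fixes `T`, so it fixes `A` and every `e^{tA}`.
-/

open NormedSpace Set MeasureTheory intervalIntegral
open scoped Ring

section RingInverse

variable {M₀ N₀ : Type*} [MonoidWithZero M₀] [MonoidWithZero N₀]

theorem Commute.ringInverse_right {a b : M₀} (h : Commute a b) : Commute a b⁻¹ʳ := by
  by_cases hb : IsUnit b
  · obtain ⟨u, rfl⟩ := hb
    rw [Ring.inverse_unit]
    exact h.units_inv_right
  · rw [Ring.inverse_non_unit b hb]
    exact Commute.zero_right a

theorem map_ringInverse {F : Type*} [FunLike F M₀ N₀] [MonoidHomClass F M₀ N₀] (f : F) {a : M₀}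
    (ha : IsUnit a) : f a⁻¹ʳ = (f a)⁻¹ʳ := by
  obtain ⟨u, rfl⟩ := ha
  change f _ = ((Units.map (f : M₀ →* N₀) u : N₀ˣ) : N₀)⁻¹ʳ
  rw [Ring.inverse_unit, Ring.inverse_unit]
  rfl

end RingInverse

theorem ContinuousOn.hasDerivWithinAt_intervalIntegral_Icc {E : Type*} [NormedAddCommGroup E]
    [NormedSpace ℝ E] [CompleteSpace E] {f : ℝ → E} {a b u : ℝ} (hf : ContinuousOn f (Icc a b))
    (hu : u ∈ Icc a b) : HasDerivWithinAt (fun x => ∫ t in a..x, f t) (f u) (Icc a b) u := by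
  have : Fact (u ∈ Icc a b) := ⟨hu⟩
  exact integral_hasDerivWithinAt_right
    ((hf.mono (Icc_subset_Icc le_rfl hu.2)).intervalIntegrable_of_Icc hu.1)
    (hf.stronglyMeasurableAtFilter_nhdsWithin measurableSet_Icc u) (hf u hu)

section RealBanachAlgebra

variable {𝔸 : Type*} [NormedRing 𝔸] [NormedAlgebra ℝ 𝔸]

theorem mem_eball_expSeries_radius (x : 𝔸) : x ∈ Metric.eball (0 : 𝔸) (expSeries ℝ 𝔸).radius :=
  (expSeries_radius_eq_top ℝ 𝔸).symm ▸ edist_lt_top _ _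

/-- `γ' (γ t)⁻¹` for the segment `γ t = 1 + t (T - 1)` from `1` to `T`, wherever `γ t` is
invertible (`⁻¹ʳ` is `0` at non-units). -/
noncomputable def logIntegrand (T : 𝔸) (t : ℝ) : 𝔸 :=
  (T - 1) * (1 + t • (T - 1))⁻¹ʳ

/-- When the spectrum of `T` avoids `(-∞, 0]`, this is the principal logarithm of `T`. -/
noncomputable def integralLog (T : 𝔸) : 𝔸 :=
  ∫ t in (0 : ℝ)..1, logIntegrand T t

theorem commute_logIntegrand {x T : 𝔸} (h : Commute x T) (t : ℝ) :
    Commute x (logIntegrand T t) :=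
  have h₁ : Commute x (T - 1) := h.sub_right (Commute.one_right x)
  h₁.mul_right ((Commute.one_right x).add_right (h₁.smul_right t)).ringInverse_right

theorem isUnit_one_add_smul_sub_one {T : 𝔸} (hT : ∀ r : ℝ, r ≤ 0 → r ∉ spectrum ℝ T) {t : ℝ}
    (ht : t ∈ Icc (0 : ℝ) 1) : IsUnit (1 + t • (T - 1)) := by
  rcases ht.1.eq_or_lt with rfl | htpos
  · simp
  have hunit : IsUnit (algebraMap ℝ 𝔸 ((t - 1) / t) - T) :=
    spectrum.notMem_iff.1 (hT _ (div_nonpos_of_nonpos_of_nonneg (by linarith [ht.2]) ht.1))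
  have heq : 1 + t • (T - 1) = (-t) • (algebraMap ℝ 𝔸 ((t - 1) / t) - T) := by
    rw [Algebra.algebraMap_eq_smul_one]
    match_scalars
    · field_simp
      ring
    · ring
  rw [heq]
  simpa using hunit.smul (Units.mk0 (-t) (neg_ne_zero.2 htpos.ne'))

variable [CompleteSpace 𝔸]

theorem Commute.intervalIntegral_right {x : 𝔸} {f : ℝ → 𝔸} {a b : ℝ}
    (hf : IntervalIntegrable f volume a b) (h : ∀ t ∈ uIcc a b, Commute x (f t)) :
    Commute x (∫ t in a..b, f t) := by
  have hl := (ContinuousLinearMap.mul ℝ 𝔸 x).intervalIntegral_comp_comm hf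
  have hr := ((ContinuousLinearMap.mul ℝ 𝔸).flip x).intervalIntegral_comp_comm hf
  simp only [ContinuousLinearMap.mul_apply', ContinuousLinearMap.flip_apply] at hl hr
  rw [Commute, SemiconjBy, ← hl, ← hr]
  exact integral_congr fun t ht => h t ht

theorem HasDerivWithinAt.exp_of_commute {F : ℝ → 𝔸} {F' : 𝔸} {s : Set ℝ} {t : ℝ}
    (hF : HasDerivWithinAt F F' s t) (hcomm : ∀ u ∈ s, Commute (F t) (F u)) :
    HasDerivWithinAt (fun u => NormedSpace.exp (F u)) (NormedSpace.exp (F t) * F') s t := by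
  have hsplit : ∀ u, Commute (F t) (F u) →
      NormedSpace.exp (F u) = NormedSpace.exp (F t) * NormedSpace.exp (F u - F t) := fun u h => by
    rw [← exp_add_of_commute_of_mem_ball (h.sub_right (Commute.refl _))
      (mem_eball_expSeries_radius _) (mem_eball_expSeries_radius _), add_sub_cancel]
  have hexp : HasFDerivAt NormedSpace.exp (1 : 𝔸 →L[ℝ] 𝔸) (F t - F t) := by
    rw [sub_self]
    exact hasFDerivAt_exp_zero
  have hshift : HasDerivWithinAt (fun u => NormedSpace.exp (F u - F t)) F' s t := by
    simpa [Function.comp_def] using hexp.comp_hasDerivWithinAt t (hF.sub_const (F t))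
  exact (hshift.const_mul (NormedSpace.exp (F t))).congr (fun u hu => hsplit u (hcomm u hu))
    (hsplit t (Commute.refl _))

theorem HasDerivAt.ringInverse {γ : ℝ → 𝔸} {γ' : 𝔸} {t : ℝ} (hγ : HasDerivAt γ γ' t)
    (ht : IsUnit (γ t)) :
    HasDerivAt (fun u => (γ u)⁻¹ʳ) (-((γ t)⁻¹ʳ * γ' * (γ t)⁻¹ʳ)) t := by
  obtain ⟨u, hu⟩ := ht
  have hinv : HasFDerivAt Ring.inverse
      (-ContinuousLinearMap.mulLeftRight ℝ 𝔸 (γ t)⁻¹ʳ (γ t)⁻¹ʳ) (γ t) := by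
    rw [← hu, Ring.inverse_unit]
    exact hasFDerivAt_ringInverse u
  simpa [Function.comp_def] using hinv.comp_hasDerivAt t hγ

theorem continuousOn_logIntegrand {T : 𝔸} (hT : ∀ t ∈ Icc (0 : ℝ) 1, IsUnit (1 + t • (T - 1))) :
    ContinuousOn (logIntegrand T) (Icc 0 1) := fun t ht =>
  continuousWithinAt_const.mul <| ContinuousAt.continuousWithinAt <|
    (NormedRing.inverse_continuousAt (hT t ht).unit).comp_of_eq (by fun_prop) (hT t ht).unit_spec.symm

theorem map_integralLog {𝔹 : Type*} [NormedRing 𝔹] [NormedAlgebra ℝ 𝔹] [CompleteSpace 𝔹]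
    (φ : 𝔸 →A[ℝ] 𝔹) {T : 𝔸} (hT : ∀ t ∈ Icc (0 : ℝ) 1, IsUnit (1 + t • (T - 1))) :
    φ (integralLog T) = integralLog (φ T) := by
  refine (φ.toContinuousLinearMap.intervalIntegral_comp_comm
    ((continuousOn_logIntegrand hT).intervalIntegrable_of_Icc zero_le_one)).symm.trans
    (integral_congr fun t ht => ?_)
  rw [uIcc_of_le zero_le_one] at ht
  simp [logIntegrand, map_ringInverse φ (hT t ht)]

theorem exp_integralLog {T : 𝔸} (hT : ∀ t ∈ Icc (0 : ℝ) 1, IsUnit (1 + t • (T - 1))) :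
    exp (integralLog T) = T := by
  set γ : ℝ → 𝔸 := fun t => 1 + t • (T - 1)
  set F : ℝ → 𝔸 := fun u => ∫ t in (0 : ℝ)..u, logIntegrand T t
  have hf : ContinuousOn (logIntegrand T) (Icc 0 1) := continuousOn_logIntegrand hT
  have hF_comm_of_comm : ∀ u ∈ Icc (0 : ℝ) 1, ∀ x, Commute x T → Commute x (F u) :=
    fun u hu x hx => Commute.intervalIntegral_right
      ((hf.mono (Icc_subset_Icc le_rfl hu.2)).intervalIntegrable_of_Icc hu.1)
      fun t _ => commute_logIntegrand hx t
  have hF_comm : ∀ u ∈ Icc (0 : ℝ) 1, ∀ v ∈ Icc (0 : ℝ) 1, Commute (F u) (F v) :=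
    fun u hu v hv => hF_comm_of_comm v hv _ (hF_comm_of_comm u hu T (Commute.refl T)).symm
  -- `exp ∘ F` and `γ` solve the same equation `y' = logIntegrand T * y`.
  have hψ : ∀ u ∈ Icc (0 : ℝ) 1,
      HasDerivWithinAt (fun u => exp (F u) * (γ u)⁻¹ʳ) 0 (Icc 0 1) u := by
    intro u hu
    have hexp := (hf.hasDerivWithinAt_intervalIntegral_Icc hu).exp_of_commute (hF_comm u hu)
    have hγ : HasDerivAt γ (T - 1) u :=
      (((hasDerivAt_id' u).smul_const (T - 1)).const_add 1).congr_deriv (one_smul ℝ _)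
    have hinv := (hγ.ringInverse (hT u hu)).hasDerivWithinAt (s := Icc 0 1)
    have hcomm : Commute (T - 1) (γ u)⁻¹ʳ :=
      ((Commute.one_right _).add_right ((Commute.refl _).smul_right u)).ringInverse_right
    have hzero : exp (F u) * logIntegrand T u * (γ u)⁻¹ʳ
        + exp (F u) * -((γ u)⁻¹ʳ * (T - 1) * (γ u)⁻¹ʳ) = 0 := by
      simp only [logIntegrand, mul_neg, ← mul_assoc, hcomm.eq, add_neg_cancel, γ]
    exact hzero ▸ hexp.mul hinv
  have hψ_const : exp (F 1) * (γ 1)⁻¹ʳ = exp (F 0) * (γ 0)⁻¹ʳ := by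
    simpa [sub_eq_zero] using Convex.norm_image_sub_le_of_norm_hasDerivWithin_le hψ
      (fun _ _ => norm_zero.le) (convex_Icc 0 1) (left_mem_Icc.2 zero_le_one)
      (right_mem_Icc.2 zero_le_one)
  have hT₁ : IsUnit T := by simpa using hT 1 (right_mem_Icc.2 zero_le_one)
  simp only [γ, F, integral_same, exp_zero, zero_smul, add_zero, Ring.inverse_one,
    one_smul, mul_one, add_sub_cancel] at hψ_const
  simpa using ((Ring.eq_mul_inverse_iff_mul_eq 1 (exp (integralLog T)) T hT₁).1
    hψ_const.symm).symm

end RealBanachAlgebra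

section Conjugation

variable {X : Type*} [NormedAddCommGroup X] [NormedSpace ℂ X]

noncomputable def conjAlgHom (C : X →L⋆[ℂ] X) (hC : Function.Involutive C) :
    (X →L[ℂ] X) →A[ℝ] (X →L[ℂ] X) where
  toFun B := C.comp (B.comp C)
  map_one' := by ext x; exact hC x
  map_mul' B₁ B₂ := by ext x; simp [hC _]
  map_zero' := by ext; simp
  map_add' B₁ B₂ := by ext; simp
  commutes' r := by
    ext x
    simp [Algebra.algebraMap_eq_smul_one, map_real_smul C C.continuous, hC x]
  cont := by
    refine continuous_of_linear_of_bound (𝕜 := ℝ) (C := ‖C‖ * ‖C‖) (fun _ _ => by ext; simp)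
      (fun _ _ => by ext; simp [map_real_smul C C.continuous]) fun B => ?_
    calc ‖C.comp (B.comp C)‖ ≤ ‖C‖ * (‖B‖ * ‖C‖) :=
          (C.opNorm_comp_le _).trans (by gcongr; exact B.opNorm_comp_le C)
      _ = ‖C‖ * ‖C‖ * ‖B‖ := by ring

theorem conjAlgHom_apply_eq_self_iff {C : X →L⋆[ℂ] X} {hC : Function.Involutive C}
    {B : X →L[ℂ] X} : conjAlgHom C hC B = B ↔ ∀ x, C (B x) = B (C x) := by
  refine ⟨fun h x => ?_, fun h => ContinuousLinearMap.ext fun x => (h (C x)).trans (by rw [hC x])⟩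
  calc C (B x) = conjAlgHom C hC B (C x) := by
        change C (B x) = C (B (C (C x)))
        rw [hC x]
    _ = B (C x) := by rw [h]

end Conjugation

/-- Let `X` be the complexification of a real Banach space, encoded by a continuous
conjugation `C` (additive, antilinear, involutive); an operator is *real* if it commutes
with `C`. If `T` is a real bounded operator whose spectrum avoids `(-∞, 0]`, then there
is a real bounded operator `A` with `e^A = T`, and the uniformly continuous group
`(e^{tA})_{t ∈ ℝ}` consists of real operators, so it embeds `T` into a real group. -/
theorem stmt_8 {X : Type*} [NormedAddCommGroup X] [NormedSpace ℂ X] [CompleteSpace X]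
    (C : X → X)
    (hCadd : ∀ x y : X, C (x + y) = C x + C y)
    (hCsmul : ∀ (c : ℂ) (x : X), C (c • x) = (starRingEnd ℂ) c • C x)
    (hCinv : ∀ x : X, C (C x) = x)
    (hCcont : Continuous C)
    (T : X →L[ℂ] X)
    (hTreal : ∀ x : X, C (T x) = T (C x))
    (hspec : ∀ z ∈ spectrum ℂ T, ¬(z.im = 0 ∧ z.re ≤ 0)) :
    ∃ A : X →L[ℂ] X, (∀ x : X, C (A x) = A (C x)) ∧
      exp A = T ∧
      ∀ t : ℝ, ∀ x : X, C ((exp ((t : ℂ) • A)) x) = (exp ((t : ℂ) • A)) (C x) := by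
  let J : X →L⋆[ℂ] X := ⟨⟨⟨C, hCadd⟩, hCsmul⟩, hCcont⟩
  have hreal {B : X →L[ℂ] X} : conjAlgHom J hCinv B = B ↔ ∀ x, C (B x) = B (C x) :=
    conjAlgHom_apply_eq_self_iff
  have hunit : ∀ t ∈ Icc (0 : ℝ) 1, IsUnit (1 + t • (T - 1)) :=
    fun t => isUnit_one_add_smul_sub_one fun r hr hmem =>
      hspec r ((spectrum.algebraMap_mem_iff ℂ).2 hmem) ⟨Complex.ofReal_im r, hr⟩
  have hA : conjAlgHom J hCinv (integralLog T) = integralLog T := by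
    rw [map_integralLog _ hunit, hreal.2 hTreal]
  refine ⟨integralLog T, hreal.1 hA, exp_integralLog hunit, fun t => hreal.1 ?_⟩
  rw [map_exp_of_mem_ball _ (conjAlgHom J hCinv).continuous _ (mem_eball_expSeries_radius _),
    Complex.coe_smul, map_smul, hA]
end

section
/- Let (T(t))_{t≥0} be a strongly continuous semigroup of entrywise nonnegative matrices with entries a_{ij}(t). If a_{ij}(1) = 0 for some i ≠ j, then a_{ij}(t) = 0 for every t ∈ [0,1]. -/
/-- Let `(a_{ij}(t))` be the matrix entries of a strongly continuous semigroup of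
entrywise nonnegative matrices. If `a_{ij}(1) = 0` for some `i ≠ j`, then
`a_{ij}(t) = 0` for every `t ∈ [0, 1]`. -/
theorem stmt_12 (a : ℝ → ℕ → ℕ → ℝ)
    (hpos : ∀ t : ℝ, 0 ≤ t → ∀ i j, 0 ≤ a t i j)
    (h0 : ∀ i j, a 0 i j = if i = j then 1 else 0)
    (hsummable : ∀ t s : ℝ, 0 ≤ t → 0 ≤ s → ∀ i j, Summable fun k => a t i k * a s k j)
    (hsem : ∀ t s : ℝ, 0 ≤ t → 0 ≤ s → ∀ i j, a (t + s) i j = ∑' k, a t i k * a s k j)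
    (hcont : ∀ i j, ContinuousOn (fun t : ℝ => a t i j) (Set.Ici 0))
    (i j : ℕ) (hij : i ≠ j) (h1 : a 1 i j = 0) :
    ∀ t ∈ Set.Icc (0 : ℝ) 1, a t i j = 0 := by
  -- superadditivity on the diagonal
  have hsuper : ∀ t s : ℝ, 0 ≤ t → 0 ≤ s → a t j j * a s j j ≤ a (t + s) j j := by
    intro t s ht hs
    rw [hsem t s ht hs j j]
    exact Summable.le_tsum (hsummable t s ht hs j j) j
      (fun k _ => mul_nonneg (hpos t ht j k) (hpos s hs k j))
  -- power inequality
  have hpow : ∀ n : ℕ, ∀ u : ℝ, 0 ≤ u → (a u j j) ^ (n + 1) ≤ a ((n + 1 : ℕ) * u) j j := by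
    intro n
    induction n with
    | zero => intro u hu; simp
    | succ m ih =>
        intro u hu
        have h1' : ((m + 2 : ℕ) : ℝ) * u = (m + 1 : ℕ) * u + u := by push_cast; ring
        calc (a u j j) ^ (m + 2) = (a u j j) ^ (m + 1) * a u j j := by ring
          _ ≤ a ((m + 1 : ℕ) * u) j j * a u j j := by
              apply mul_le_mul_of_nonneg_right (ih u hu) (hpos u hu j j)
          _ ≤ a ((m + 1 : ℕ) * u + u) j j := hsuper _ _ (by positivity) hu
          _ = a ((m + 2 : ℕ) * u) j j := by rw [h1']
  -- diagonal positivity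
  have hdiagpos : ∀ s : ℝ, 0 ≤ s → 0 < a s j j := by
    have hcw : ContinuousWithinAt (fun t : ℝ => a t j j) (Set.Ici 0) 0 :=
      (hcont j j) 0 (Set.self_mem_Ici)
    have h00 : a 0 j j = 1 := by simp [h0]
    have htend : Filter.Tendsto (fun t : ℝ => a t j j) (nhdsWithin 0 (Set.Ici 0)) (nhds 1) := by
      have := hcw.tendsto; rwa [h00] at this
    have hev : ∀ᶠ t in nhdsWithin 0 (Set.Ici 0), (1 : ℝ) / 2 < a t j j :=
      htend.eventually (eventually_gt_nhds (by norm_num))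
    rw [Filter.Eventually, Metric.mem_nhdsWithin_iff] at hev
    obtain ⟨ε, hε, hball⟩ := hev
    intro s hs
    obtain ⟨N, hN⟩ := exists_nat_gt (s / ε)
    have hN0 : 0 < N := by
      by_contra h
      push_neg at h
      interval_cases N
      simp at hN
      nlinarith [div_nonneg hs hε.le]
    obtain ⟨m, rfl⟩ := Nat.exists_eq_succ_of_ne_zero hN0.ne'
    set u := s / (m + 1 : ℕ) with hu
    have hu0 : 0 ≤ u := div_nonneg hs (by positivity)
    have huε : u < ε := by
      rw [hu, div_lt_iff₀ (by positivity)]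
      have : s / ε < (m + 1 : ℕ) := hN
      rw [div_lt_iff₀ hε] at this
      linarith [this]
    have hupos : (1:ℝ)/2 < a u j j := by
      apply hball
      constructor
      · simp [Metric.mem_ball, Real.dist_eq, abs_of_nonneg hu0, huε]
      · exact hu0
    have hsu : ((m + 1 : ℕ) : ℝ) * u = s := by
      rw [hu]; field_simp
    have := hpow m u hu0
    rw [hsu] at this
    calc (0:ℝ) < ((1:ℝ)/2) ^ (m + 1) := by positivity
      _ ≤ (a u j j) ^ (m + 1) := pow_le_pow_left₀ (by norm_num) hupos.le _
      _ ≤ a s j j := this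
  -- main argument
  intro t ht
  obtain ⟨ht0, ht1⟩ := ht
  have h1t : (0:ℝ) ≤ 1 - t := by linarith
  have heq : a 1 i j = ∑' k, a t i k * a (1 - t) k j := by
    have := hsem t (1 - t) ht0 h1t i j
    rwa [show t + (1 - t) = 1 by ring] at this
  have hterm : a t i j * a (1 - t) j j ≤ a 1 i j := by
    rw [heq]
    exact Summable.le_tsum (hsummable t (1 - t) ht0 h1t i j) j
      (fun k _ => mul_nonneg (hpos t ht0 i k) (hpos (1 - t) h1t k j))
  rw [h1] at hterm
  have hjj := hdiagpos (1 - t) h1t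
  have hij0 := hpos t ht0 i j
  nlinarith
end

section
/- If T is embeddable into a strongly continuous group (T(t))_{t∈ℝ} of positive (entrywise nonnegative) matrices with T(1) = T, then T is a diagonal matrix with strictly positive diagonal entries. -/
/-- If `T` is embeddable into a strongly continuous group `(a_{ij}(t))_{t ∈ ℝ}` of
positive (entrywise nonnegative) matrices with `T = a(1)`, then `T` is a diagonal
matrix with strictly positive diagonal entries. -/
theorem stmt_13 (a : ℝ → ℕ → ℕ → ℝ) (T : ℕ → ℕ → ℝ)
    (hpos : ∀ (t : ℝ) (i j : ℕ), 0 ≤ a t i j)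
    (h0 : ∀ i j, a 0 i j = if i = j then 1 else 0)
    (hsummable : ∀ t s : ℝ, ∀ i j, Summable fun k => a t i k * a s k j)
    (hsem : ∀ t s : ℝ, ∀ i j, a (t + s) i j = ∑' k, a t i k * a s k j)
    (hcont : ∀ i j, Continuous fun t : ℝ => a t i j)
    (hT : ∀ i j, T i j = a 1 i j) :
    (∀ i j, i ≠ j → T i j = 0) ∧ (∀ j, 0 < T j j) := by
  -- Key: all diagonal entries of every a t are strictly positive.
  have key : ∀ (t : ℝ) (i : ℕ), 0 < a t i i := by
    intro t i
    have hopen : IsOpen {s : ℝ | 0 < a s i i} := isOpen_lt continuous_const (hcont i i)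
    have h0i : (0 : ℝ) ∈ {s : ℝ | 0 < a s i i} := by simp [h0]
    obtain ⟨ε, hε, hball⟩ := Metric.isOpen_iff.mp hopen 0 h0i
    have step : ∀ (n : ℕ) (s : ℝ), 0 < a s i i → 0 < a ((n : ℝ) * s) i i := by
      intro n
      induction n with
      | zero => intro s _; simp [h0]
      | succ n ih =>
        intro s hs
        have h2 : 0 < a ((n : ℝ) * s) i i := ih s hs
        have hle : a ((n : ℝ) * s) i i * a s i i ≤ a ((n : ℝ) * s + s) i i := by
          rw [hsem]
          exact Summable.le_tsum (hsummable _ _ i i) i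
            (fun k _ => mul_nonneg (hpos _ _ _) (hpos _ _ _))
        have h1 : ((n : ℕ) + 1 : ℕ) * s = (n : ℝ) * s + s := by push_cast; ring
        rw [h1]
        exact lt_of_lt_of_le (mul_pos h2 hs) hle
    obtain ⟨n, hn⟩ := exists_nat_gt (|t| / ε)
    have hn0 : 0 < (n : ℝ) := lt_of_le_of_lt (div_nonneg (abs_nonneg t) hε.le) hn
    have hsmall : |t / (n : ℝ)| < ε := by
      rw [abs_div, abs_of_pos hn0, div_lt_iff₀ hn0]
      calc |t| = |t| / ε * ε := by field_simp
        _ < (n : ℝ) * ε := by exact mul_lt_mul_of_pos_right hn hε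
        _ = ε * n := by ring
    have hmem : 0 < a (t / (n : ℝ)) i i := by
      apply hball
      rw [Metric.mem_ball, Real.dist_eq, sub_zero]; exact hsmall
    have := step n (t / (n : ℝ)) hmem
    rwa [mul_div_cancel₀ _ (ne_of_gt hn0)] at this
  constructor
  · intro i j hij
    have hsum := hsem 1 (-1) i j
    norm_num at hsum
    have hz : (0 : ℝ) = ∑' k, a 1 i k * a (-1) k j := by
      rw [← hsum, h0, if_neg hij]
    have hterm : a 1 i j * a (-1) j j ≤ 0 := by
      rw [hz]
      exact Summable.le_tsum (hsummable 1 (-1) i j) j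
        (fun k _ => mul_nonneg (hpos _ _ _) (hpos _ _ _))
    have hnn : 0 ≤ a 1 i j * a (-1) j j :=
      mul_nonneg (hpos _ _ _) (hpos _ _ _)
    have heq : a 1 i j * a (-1) j j = 0 := le_antisymm hterm hnn
    rw [hT]
    rcases mul_eq_zero.mp heq with h | h
    · exact h
    · exact absurd h (ne_of_gt (key (-1) j))
  · intro j
    rw [hT]
    exact key 1 j
end

section
/- The only strongly continuous semigroup of positive (entrywise nonnegative) matrices (T(t))_{t≥0} with T(1) = I is the trivial one, T(t) = I for all t ≥ 0. -/
/-!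
For small `t = 1/n` the diagonal of `T t` is close to that of `T 0 = 1`, hence positive, and
`(T (1/n))ⁿ = T 1 = 1`. A nonnegative matrix `S` with positive diagonal and `Sᵐ = 1` is the
identity: `(Sᵐ)ᵢⱼ ≥ Sᵢⱼ Sⱼⱼᵐ⁻¹` kills the off-diagonal entries, and a positive diagonal root of
`1` is `1`. So `T (1/n) = 1` for all large `n`, hence `T q = 1` for every rational `q ≥ 0`,
and continuity extends this to all `t ≥ 0`.
-/

open Filter Set Topology

namespace Matrix

variable {n R : Type*} [Fintype n] [DecidableEq n] [Semiring R] [LinearOrder R]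
  [IsStrictOrderedRing R] {S : Matrix n n R}

theorem apply_mul_diag_pow_le_pow_succ_apply (hS : ∀ i j, 0 ≤ S i j) (i j : n) (k : ℕ) :
    S i j * S j j ^ k ≤ (S ^ (k + 1)) i j := by
  induction k with
  | zero => simp
  | succ k ih =>
    calc S i j * S j j ^ (k + 1) = S i j * S j j ^ k * S j j := by rw [pow_succ, mul_assoc]
      _ ≤ (S ^ (k + 1)) i j * S j j := mul_le_mul_of_nonneg_right ih (hS j j)
      _ ≤ ∑ l, (S ^ (k + 1)) i l * S l j :=
        Finset.single_le_sum (fun l _ => mul_nonneg (pow_apply_nonneg hS _ i l) (hS l j))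
          (Finset.mem_univ j)
      _ = (S ^ (k + 2)) i j := by rw [pow_succ _ (k + 1), mul_apply]

theorem isDiag_of_pow_eq_one_of_nonneg (hS : ∀ i j, 0 ≤ S i j) (hdiag : ∀ i, 0 < S i i)
    {m : ℕ} (hm : m ≠ 0) (h : S ^ m = 1) : S.IsDiag := by
  intro i j hij
  obtain ⟨k, rfl⟩ := Nat.exists_eq_succ_of_ne_zero hm
  have hle := apply_mul_diag_pow_le_pow_succ_apply hS i j k
  rw [h, one_apply_ne hij] at hle
  exact (nonpos_of_mul_nonpos_left hle (pow_pos (hdiag j) k)).antisymm (hS i j)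

theorem eq_one_of_pow_eq_one_of_nonneg (hS : ∀ i j, 0 ≤ S i j) (hdiag : ∀ i, 0 < S i i)
    {m : ℕ} (hm : m ≠ 0) (h : S ^ m = 1) : S = 1 := by
  have hS_eq : diagonal S.diag = S := (isDiag_of_pow_eq_one_of_nonneg hS hdiag hm h).diagonal_diag
  rw [← hS_eq, diagonal_pow, ← diagonal_one, diagonal_eq_diagonal_iff] at h
  rw [← hS_eq, ← diagonal_one, diagonal_eq_diagonal_iff]
  exact fun i => (pow_eq_one_iff_of_nonneg (hdiag i).le hm).1 (h i)

end Matrix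

section Semigroup

variable {M : Type*} [Monoid M] {T : ℝ → M}

theorem semigroup_natCast_mul (h0 : T 0 = 1)
    (hsem : ∀ t s : ℝ, 0 ≤ t → 0 ≤ s → T (t + s) = T t * T s) (n : ℕ) {t : ℝ}
    (ht : 0 ≤ t) : T (n * t) = T t ^ n := by
  induction n with
  | zero => simpa using h0
  | succ n ih =>
    rw [Nat.cast_succ, add_one_mul, hsem _ _ (by positivity) ht, ih, pow_succ]

theorem semigroup_ratCast_eq_one (h0 : T 0 = 1)
    (hsem : ∀ t s : ℝ, 0 ≤ t → 0 ≤ s → T (t + s) = T t * T s)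
    (hinv : ∀ᶠ n : ℕ in atTop, T (n : ℝ)⁻¹ = 1) {q : ℚ} (hq : 0 ≤ q) : T q = 1 := by
  obtain ⟨N, hN⟩ := eventually_atTop.1 hinv
  have hq_eq :
      (q : ℝ) = ((q.num.toNat * (N + 1) : ℕ) : ℝ) * ((q.den * (N + 1) : ℕ) : ℝ)⁻¹ := by
    have hnum : ((q.num.toNat : ℕ) : ℝ) = q.num := by
      exact_mod_cast Int.toNat_of_nonneg (Rat.num_nonneg.2 hq)
    rw [Rat.cast_def]
    push_cast [hnum]
    field_simp
  have hN' : N ≤ q.den * (N + 1) := le_mul_of_one_le_of_le q.den_pos (Nat.le_succ N)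
  rw [hq_eq, semigroup_natCast_mul h0 hsem _ (by positivity), hN _ hN', one_pow]

end Semigroup

theorem ContinuousOn.eqOn_Ici_zero_of_ratCast {X : Type*} [TopologicalSpace X] [T2Space X]
    {f g : ℝ → X} (hf : ContinuousOn f (Ici 0)) (hg : ContinuousOn g (Ici 0))
    (h : ∀ q : ℚ, 0 ≤ q → f q = g q) : EqOn f g (Ici 0) := by
  refine EqOn.of_subset_closure (s := Ioi 0 ∩ range ((↑) : ℚ → ℝ)) ?_ hf hg
    (inter_subset_left.trans Ioi_subset_Ici_self) ?_
  · rintro _ ⟨hpos, q, rfl⟩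
    exact h q (Rat.cast_pos.1 (mem_Ioi.1 hpos)).le
  · rw [← closure_Ioi]
    exact closure_minimal (Rat.denseRange_cast.open_subset_closure_inter isOpen_Ioi)
      isClosed_closure

/-- The only strongly continuous semigroup of positive (entrywise nonnegative)
matrices `(T(t))_{t ≥ 0}` with `T(1) = I` is the trivial one: `T(t) = I` for all
`t ≥ 0`. -/
theorem stmt_15 {d : ℕ} (T : ℝ → Matrix (Fin d) (Fin d) ℝ)
    (h0 : T 0 = 1)
    (hsem : ∀ t s : ℝ, 0 ≤ t → 0 ≤ s → T (t + s) = T t * T s)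
    (hpos : ∀ t : ℝ, 0 ≤ t → ∀ i j, 0 ≤ T t i j)
    (hcont : ∀ i j : Fin d, ContinuousOn (fun t : ℝ => T t i j) (Set.Ici 0))
    (h1 : T 1 = 1) :
    ∀ t : ℝ, 0 ≤ t → T t = 1 := by
  have hinv_nonneg : Tendsto (fun n : ℕ => (n : ℝ)⁻¹) atTop (𝓝[≥] 0) :=
    (tendsto_inv_atTop_nhdsGT_zero.comp tendsto_natCast_atTop_atTop).mono_right
      (nhdsWithin_mono _ Ioi_subset_Ici_self)
  have hdiag : ∀ᶠ n : ℕ in atTop, ∀ i, 0 < T (n : ℝ)⁻¹ i i := by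
    refine eventually_all.2 fun i => ?_
    have hTii : Tendsto (fun t => T t i i) (𝓝[≥] 0) (𝓝 1) := by
      simpa [h0] using (hcont i i 0 self_mem_Ici).tendsto
    exact hinv_nonneg.eventually (hTii.eventually (lt_mem_nhds one_pos))
  have hroot : ∀ᶠ n : ℕ in atTop, T (n : ℝ)⁻¹ = 1 := by
    filter_upwards [hdiag, eventually_ne_atTop 0] with n hn hn0
    refine Matrix.eq_one_of_pow_eq_one_of_nonneg (hpos _ (by positivity)) hn hn0 ?_
    rw [← semigroup_natCast_mul h0 hsem n (by positivity),
      mul_inv_cancel₀ (Nat.cast_ne_zero.2 hn0), h1]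
  have hTcont : ContinuousOn T (Ici 0) :=
    continuousOn_pi.2 fun i => continuousOn_pi.2 fun j => hcont i j
  exact fun t ht => hTcont.eqOn_Ici_zero_of_ratCast continuousOn_const
    (fun q hq => semigroup_ratCast_eq_one h0 hsem hroot hq) ht
end

section
/- A d×d Jordan block J = λI + N with λ > 0 and d ≥ 3 is not embeddable into a semigroup of positive (entrywise nonnegative) matrices; equivalently, there is no entrywise nonnegative matrix S with S² = J that vanishes on the entries where J vanishes. -/
def jordanBlockR (d : ℕ) (lam : ℝ) : Matrix (Fin d) (Fin d) ℝ :=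
  lam • (1 : Matrix (Fin d) (Fin d) ℝ) +
    (Matrix.of fun i j : Fin d => if (i : ℕ) + 1 = (j : ℕ) then 1 else 0)

lemma jordan_apply (d : ℕ) (lam : ℝ) (i j : Fin d) :
    jordanBlockR d lam i j
      = lam * (if i = j then 1 else 0) + (if (i : ℕ) + 1 = (j : ℕ) then 1 else 0) := by
  simp [jordanBlockR, Matrix.add_apply, Matrix.one_apply, Matrix.smul_apply, smul_eq_mul]

lemma key (d : ℕ) (hd : 3 ≤ d) (lam : ℝ) (hlam : 0 < lam)
    (S : Matrix (Fin d) (Fin d) ℝ)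
    (hpos : ∀ i j, 0 ≤ S i j)
    (hlow : ∀ i j : Fin d, (j : ℕ) < (i : ℕ) → S i j = 0)
    (hsq : S * S = jordanBlockR d lam) : False := by
  set i0 : Fin d := ⟨0, by omega⟩
  set i1 : Fin d := ⟨1, by omega⟩
  set i2 : Fin d := ⟨2, by omega⟩
  have e02 : (∑ k, S i0 k * S k i2) = 0 := by
    have h := congrFun (congrFun hsq i0) i2
    rw [Matrix.mul_apply] at h
    rw [h, jordan_apply]
    simp [i0, i2, Fin.ext_iff]
  have h012 : S i0 i1 * S i1 i2 = 0 :=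
    (Finset.sum_eq_zero_iff_of_nonneg
      (fun k _ => mul_nonneg (hpos _ _) (hpos _ _))).mp e02 i1 (Finset.mem_univ _)
  have e01 : (∑ k, S i0 k * S k i1) = 1 := by
    have h := congrFun (congrFun hsq i0) i1
    rw [Matrix.mul_apply] at h
    rw [h, jordan_apply]
    simp [i0, i1, Fin.ext_iff]
  have h01 : S i0 i0 * S i0 i1 + S i0 i1 * S i1 i1 = 1 := by
    rw [← e01]
    rw [Fintype.sum_eq_add i0 i1 (by simp [i0, i1, Fin.ext_iff]) ?_]
    intro c hc
    have hc0 : (c : ℕ) ≠ 0 := fun h => hc.1 (Fin.ext h)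
    have hc1 : (c : ℕ) ≠ 1 := fun h => hc.2 (Fin.ext h)
    rw [hlow c i1 (by simp [i1]; omega), mul_zero]
  have e12 : (∑ k, S i1 k * S k i2) = 1 := by
    have h := congrFun (congrFun hsq i1) i2
    rw [Matrix.mul_apply] at h
    rw [h, jordan_apply]
    simp [i1, i2, Fin.ext_iff]
  have h12 : S i1 i1 * S i1 i2 + S i1 i2 * S i2 i2 = 1 := by
    rw [← e12]
    rw [Fintype.sum_eq_add i1 i2 (by simp [i1, i2, Fin.ext_iff]) ?_]
    intro c hc
    have hc1 : (c : ℕ) ≠ 1 := fun h => hc.1 (Fin.ext h)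
    have hc2 : (c : ℕ) ≠ 2 := fun h => hc.2 (Fin.ext h)
    rcases Nat.lt_or_ge (c : ℕ) 1 with h | h
    · rw [hlow i1 c (by simp [i1]; omega), zero_mul]
    · rw [hlow c i2 (by simp [i2]; omega), mul_zero]
  rcases mul_eq_zero.mp h012 with h | h
  · rw [h] at h01; simp at h01
  · rw [h] at h12; simp at h12

/-- A `d × d` Jordan block `J = λI + N` with `λ > 0` and `d ≥ 3` is not embeddable into
a strongly continuous semigroup of positive (entrywise nonnegative) matrices; moreover,
there is no entrywise nonnegative matrix `S` with `S² = J` vanishing on all the entries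
where `J` vanishes. -/
theorem stmt_16 (d : ℕ) (hd : 3 ≤ d) (lam : ℝ) (hlam : 0 < lam) :
    (¬ ∃ T : ℝ → Matrix (Fin d) (Fin d) ℝ,
        T 0 = 1 ∧
        (∀ t s : ℝ, 0 ≤ t → 0 ≤ s → T (t + s) = T t * T s) ∧
        (∀ t : ℝ, 0 ≤ t → ∀ i j, 0 ≤ T t i j) ∧
        (∀ i j : Fin d, ContinuousOn (fun t : ℝ => T t i j) (Set.Ici 0)) ∧
        T 1 = jordanBlockR d lam) ∧
    (¬ ∃ S : Matrix (Fin d) (Fin d) ℝ,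
        (∀ i j, 0 ≤ S i j) ∧
        (∀ i j, jordanBlockR d lam i j = 0 → S i j = 0) ∧
        S ^ 2 = jordanBlockR d lam) := by
  constructor
  · rintro ⟨T, hT0, hmul, hpos, hcont, hT1⟩
    set S := T (1/2) with hSdef
    have hS2 : S * S = jordanBlockR d lam := by
      have := hmul (1/2) (1/2) (by norm_num) (by norm_num)
      norm_num at this
      rw [← this, hT1]
    have hcomm : S * jordanBlockR d lam = jordanBlockR d lam * S := by
      rw [← hS2, ← mul_assoc]
    -- entrywise commutation relation with the nilpotent part
    have hrel : ∀ i j : Fin d,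
        (∑ k, S i k * (if (k : ℕ) + 1 = (j : ℕ) then (1:ℝ) else 0))
      = (∑ k : Fin d, (if (i : ℕ) + 1 = (k : ℕ) then (1:ℝ) else 0) * S k j) := by
      intro i j
      have h := congrFun (congrFun hcomm i) j
      rw [Matrix.mul_apply, Matrix.mul_apply] at h
      simp only [jordan_apply, mul_add, add_mul] at h
      rw [Finset.sum_add_distrib, Finset.sum_add_distrib] at h
      have hL : ∑ k, S i k * (lam * if k = j then (1:ℝ) else 0) = lam * S i j := by
        rw [Finset.sum_eq_single j]
        · rw [if_pos rfl]; ring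
        · intro b _ hb; rw [if_neg hb]; ring
        · intro hj; exact absurd (Finset.mem_univ j) hj
      have hR : ∑ k, (lam * if i = k then (1:ℝ) else 0) * S k j = lam * S i j := by
        rw [Finset.sum_eq_single i]
        · rw [if_pos rfl]; ring
        · intro b _ hb; rw [if_neg (fun h => hb h.symm)]; ring
        · intro hi; exact absurd (Finset.mem_univ i) hi
      rw [hL, hR] at h
      linarith
    have sumA : ∀ (i' j' j : Fin d), (j' : ℕ) + 1 = (j : ℕ) →
        (∑ k : Fin d, S i' k * (if (k : ℕ) + 1 = (j : ℕ) then (1:ℝ) else 0)) = S i' j' := by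
      intro i' j' j hj
      rw [Finset.sum_eq_single j']
      · rw [if_pos hj, mul_one]
      · intro b _ hb
        rw [if_neg (fun hc => hb (Fin.ext (by omega))), mul_zero]
      · intro hmem; exact absurd (Finset.mem_univ _) hmem
    have sumA0 : ∀ (i' j : Fin d), (j : ℕ) = 0 →
        (∑ k : Fin d, S i' k * (if (k : ℕ) + 1 = (j : ℕ) then (1:ℝ) else 0)) = 0 := by
      intro i' j hj
      apply Finset.sum_eq_zero
      intro k _
      rw [if_neg (by omega), mul_zero]
    have sumB : ∀ (i' i j : Fin d), (i' : ℕ) + 1 = (i : ℕ) →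
        (∑ k : Fin d, (if (i' : ℕ) + 1 = (k : ℕ) then (1:ℝ) else 0) * S k j) = S i j := by
      intro i' i j hi
      rw [Finset.sum_eq_single i]
      · rw [if_pos hi, one_mul]
      · intro b _ hb
        rw [if_neg (fun hc => hb (Fin.ext (by omega))), zero_mul]
      · intro hmem; exact absurd (Finset.mem_univ _) hmem
    have hcol0 : ∀ i : Fin d, 1 ≤ (i : ℕ) → S i ⟨0, by omega⟩ = 0 := by
      intro i hi
      have h := hrel ⟨(i : ℕ) - 1, by omega⟩ ⟨0, by omega⟩
      rw [sumA0 _ _ rfl, sumB _ i _ (by show (i:ℕ) - 1 + 1 = (i:ℕ); omega)] at h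
      exact h.symm
    have hshift : ∀ i j : Fin d, 1 ≤ (i : ℕ) → 1 ≤ (j : ℕ) →
        S i j = S ⟨(i : ℕ) - 1, by omega⟩ ⟨(j : ℕ) - 1, by omega⟩ := by
      intro i j hi hj
      have h := hrel ⟨(i : ℕ) - 1, by omega⟩ j
      rw [sumA _ ⟨(j : ℕ) - 1, by omega⟩ j (by show (j:ℕ) - 1 + 1 = (j:ℕ); omega),
        sumB _ i j (by show (i:ℕ) - 1 + 1 = (i:ℕ); omega)] at h
      exact h.symm
    have hlow : ∀ n : ℕ, ∀ i j : Fin d, (j : ℕ) = n → (j : ℕ) < (i : ℕ) → S i j = 0 := by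
      intro n
      induction n with
      | zero =>
        intro i j hj hij
        rw [show j = (⟨0, by omega⟩ : Fin d) from Fin.ext hj]
        exact hcol0 i (by omega)
      | succ n ih =>
        intro i j hj hij
        rw [hshift i j (by omega) (by omega)]
        exact ih _ _ (by show (j:ℕ) - 1 = n; omega) (by show (j:ℕ) - 1 < (i:ℕ) - 1; omega)
    exact key d hd lam hlam S (hpos (1/2) (by norm_num)) (fun i j h => hlow _ i j rfl h) hS2
  · rintro ⟨S, hpos, hz, hsq⟩
    have hlow : ∀ i j : Fin d, (j : ℕ) < (i : ℕ) → S i j = 0 := by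
      intro i j hij
      apply hz
      rw [jordan_apply]
      have h1 : ¬ (i = j) := fun h => by simp [h] at hij
      have h2 : ¬ ((i : ℕ) + 1 = (j : ℕ)) := by omega
      simp [h1, h2]
    exact key d hd lam hlam S hpos hlow (by rw [← hsq, pow_two])
end

section
/- For an entrywise nonnegative 2×2 real matrix T, the following are equivalent: (i) T is invertible and has an entrywise nonnegative square root; (ii) all eigenvalues of T are real and strictly positive; (iii) det T > 0. -/
lemma spec_iff (M : Matrix (Fin 2) (Fin 2) ℂ) (μ : ℂ) :
    μ ∈ spectrum ℂ M ↔ μ ^ 2 - M.trace * μ + M.det = 0 := by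
  rw [spectrum.mem_iff, Matrix.isUnit_iff_isUnit_det, isUnit_iff_ne_zero, not_ne_iff]
  simp [Matrix.det_fin_two, Matrix.trace_fin_two, Matrix.algebraMap_eq_diagonal,
    Matrix.diagonal]
  constructor <;> intro h <;> [linear_combination h; linear_combination h]

lemma spec_iff_real (T : Matrix (Fin 2) (Fin 2) ℝ) (μ : ℂ) :
    μ ∈ spectrum ℂ (T.map Complex.ofReal) ↔
      μ ^ 2 - (T.trace : ℂ) * μ + (T.det : ℂ) = 0 := by
  rw [spec_iff]
  congr! 3
  · simp [Matrix.trace_fin_two]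
  · simp [Matrix.det_fin_two]

lemma sqrt_exists (T : Matrix (Fin 2) (Fin 2) ℝ) (hT : ∀ i j, 0 ≤ T i j)
    (hdet : 0 < T.det) :
    ∃ S : Matrix (Fin 2) (Fin 2) ℝ, (∀ i j, 0 ≤ S i j) ∧ S ^ 2 = T := by
  have hdf : T.det = T 0 0 * T 1 1 - T 0 1 * T 1 0 := Matrix.det_fin_two T
  have hbc : 0 ≤ T 0 1 * T 1 0 := mul_nonneg (hT 0 1) (hT 1 0)
  have ha : 0 < T 0 0 := by nlinarith [hT 0 0, hT 1 1]
  have hd : 0 < T 1 1 := by nlinarith [hT 0 0, hT 1 1]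
  set s := Real.sqrt T.det with hs
  have hs2 : s * s = T.det := Real.mul_self_sqrt hdet.le
  have hs0 : 0 ≤ s := Real.sqrt_nonneg _
  set k := T 0 0 + T 1 1 + 2 * s with hkdef
  have hk : 0 < k := by positivity
  set c := Real.sqrt k with hc
  have hc2 : c * c = k := Real.mul_self_sqrt hk.le
  have hc0 : 0 < c := Real.sqrt_pos.2 hk
  have hTT : (T + s • (1 : Matrix (Fin 2) (Fin 2) ℝ)) ^ 2 = k • T := by
    ext i j
    fin_cases i <;> fin_cases j <;>
      simp [pow_two, Matrix.mul_apply, Fin.sum_univ_two, Matrix.one_apply,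
        Matrix.add_apply, Matrix.smul_apply] <;>
      first
        | ring1
        | linear_combination hs2 + hdf
  refine ⟨c⁻¹ • (T + s • (1 : Matrix (Fin 2) (Fin 2) ℝ)), ?_, ?_⟩
  · intro i j
    have hij := hT i j
    by_cases h : i = j
    · subst h
      have h1 := hT i i
      simp [Matrix.smul_apply, Matrix.one_apply]
      positivity
    · simp [Matrix.smul_apply, Matrix.one_apply, h]
      positivity
  · calc (c⁻¹ • (T + s • (1 : Matrix (Fin 2) (Fin 2) ℝ))) ^ 2
        = (c⁻¹) ^ 2 • (T + s • (1 : Matrix (Fin 2) (Fin 2) ℝ)) ^ 2 := smul_pow _ _ _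
      _ = k⁻¹ • (k • T) := by
          rw [hTT, pow_two, ← mul_inv, hc2]
      _ = T := by rw [smul_smul, inv_mul_cancel₀ hk.ne', one_smul]

/-- For an entrywise nonnegative real `2 × 2` matrix `T`, the following are equivalent:
(i) `T` is invertible and has an entrywise nonnegative square root;
(ii) all eigenvalues of `T` (over `ℂ`) are real and strictly positive;
(iii) `det T > 0`. -/
theorem stmt_17 (T : Matrix (Fin 2) (Fin 2) ℝ) (hT : ∀ i j, 0 ≤ T i j) :
    ((IsUnit T.det ∧ ∃ S : Matrix (Fin 2) (Fin 2) ℝ, (∀ i j, 0 ≤ S i j) ∧ S ^ 2 = T) ↔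
      (∀ μ ∈ spectrum ℂ (T.map Complex.ofReal), ∃ r : ℝ, 0 < r ∧ μ = (r : ℂ))) ∧
    ((∀ μ ∈ spectrum ℂ (T.map Complex.ofReal), ∃ r : ℝ, 0 < r ∧ μ = (r : ℂ)) ↔
      0 < T.det) := by
  have hdf : T.det = T 0 0 * T 1 1 - T 0 1 * T 1 0 := Matrix.det_fin_two T
  have htf : T.trace = T 0 0 + T 1 1 := Matrix.trace_fin_two T
  have ht0 : 0 ≤ T.trace := by rw [htf]; have := hT 0 0; have := hT 1 1; linarith
  have hbc : 0 ≤ T 0 1 * T 1 0 := mul_nonneg (hT 0 1) (hT 1 0)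
  have key : (∀ μ ∈ spectrum ℂ (T.map Complex.ofReal), ∃ r : ℝ, 0 < r ∧ μ = (r : ℂ)) ↔
      0 < T.det := by
    constructor
    · intro h
      by_contra hdet
      push_neg at hdet
      set D := T.trace ^ 2 - 4 * T.det with hD
      have hD0 : 0 ≤ D := by nlinarith
      set μ := (T.trace - Real.sqrt D) / 2 with hμ
      have hsq : Real.sqrt D * Real.sqrt D = D := Real.mul_self_sqrt hD0
      have hroot : μ ^ 2 - T.trace * μ + T.det = 0 := by
        rw [hμ]; nlinarith [hsq]
      have hmem : (μ : ℂ) ∈ spectrum ℂ (T.map Complex.ofReal) := by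
        rw [spec_iff_real]
        exact_mod_cast congrArg (Complex.ofReal) hroot
      obtain ⟨r, hr, hμr⟩ := h _ hmem
      have : μ = r := by exact_mod_cast hμr
      have hge : T.trace ≤ Real.sqrt D := by
        calc T.trace = Real.sqrt (T.trace ^ 2) := by
              rw [Real.sqrt_sq ht0]
          _ ≤ Real.sqrt D := Real.sqrt_le_sqrt (by nlinarith)
      have : μ ≤ 0 := by rw [hμ]; linarith
      linarith
    · intro hdet μ hμ
      rw [spec_iff_real, Complex.ext_iff] at hμ
      obtain ⟨h1, h2⟩ := hμ
      simp [pow_two, Complex.add_re, Complex.add_im, Complex.mul_re, Complex.mul_im,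
        Complex.sub_re, Complex.sub_im] at h1 h2
      set x := μ.re with hx
      set y := μ.im with hy
      have hDpos : 0 ≤ T.trace ^ 2 - 4 * T.det := by
        rw [hdf, htf]; nlinarith [sq_nonneg (T 0 0 - T 1 1)]
      have hy0 : y = 0 := by
        by_contra hyne
        have h2' : y * (2 * x - T.trace) = 0 := by linarith [h2]
        have hxval : 2 * x = T.trace := by
          rcases mul_eq_zero.1 h2' with h | h
          · exact absurd h hyne
          · linarith
        have ht2 : T.trace * x = 2 * (x * x) := by rw [← hxval]; ring
        have ht3 : T.trace ^ 2 = 4 * (x * x) := by rw [← hxval]; ring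
        nlinarith [h1, mul_self_pos.2 hyne, ht2, ht3, hDpos]
      have h1' : x * x - T.trace * x + T.det = 0 := by
        rw [hy0] at h1; linarith [h1]
      have hxpos : 0 < x := by nlinarith [h1', ht0, hdet, sq_nonneg x]
      exact ⟨x, hxpos, Complex.ext rfl (by simp [← hy, hy0])⟩
  have keyB : (IsUnit T.det ∧
      ∃ S : Matrix (Fin 2) (Fin 2) ℝ, (∀ i j, 0 ≤ S i j) ∧ S ^ 2 = T) ↔ 0 < T.det := by
    constructor
    · rintro ⟨hu, S, hS, hS2⟩
      have hne : T.det ≠ 0 := by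
        intro h; rw [h] at hu; exact (not_isUnit_zero) hu
      have : T.det = S.det ^ 2 := by
        rw [← hS2, Matrix.det_pow]
      have := sq_nonneg S.det
      rcases lt_or_eq_of_le (by linarith : (0:ℝ) ≤ T.det) with h | h
      · exact h
      · exact absurd h.symm hne
    · intro hdet
      exact ⟨isUnit_iff_ne_zero.2 hdet.ne', sqrt_exists T hT hdet⟩
  exact ⟨keyB.trans key.symm, key⟩
end

section
/- Let T be the 3×3 upper triangular matrix with 1's on the diagonal and entries a, b ≥ 0 on the superdiagonal and c ≥ 0 in the corner (T_{12}=a, T_{23}=b, T_{13}=c). Then T has an entrywise nonnegative upper triangular square root if and only if c ≥ ab/4, and T is embeddable into a semigroup generated by a nonnegative strictly upper triangular matrix if and only if c ≥ ab/2. -/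
/-!
A nonnegative upper triangular square root `S` of `T` has diagonal entries that are nonnegative
square roots of `1`, hence equal to `1`; comparing the off-diagonal entries of `S ^ 2` with those
of `T` then determines `S` uniquely, and its corner entry is `(c - ab/4)/2`. Likewise a strictly
upper triangular `A` satisfies `A ^ 3 = 0`, so `exp A = 1 + A + A ^ 2 / 2`, which determines `A`
uniquely from `T` with corner entry `c - ab/2`. In both cases the remaining entries are `a/2, b/2`
resp. `a, b`, so the root (resp. logarithm) is nonnegative exactly when its corner entry is.
-/

open Finset NormedSpace
open scoped Nat

theorem NormedSpace.exp_eq_sum_range_of_pow_eq_zero {𝔸 : Type*} [Ring 𝔸] [Algebra ℚ 𝔸]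
    [TopologicalSpace 𝔸] [IsTopologicalRing 𝔸] {x : 𝔸} {n : ℕ} (h : x ^ n = 0) :
    exp x = ∑ i ∈ range n, (i ! : ℚ)⁻¹ • x ^ i := by
  rw [exp_eq_tsum_rat]
  refine tsum_eq_sum fun i hi => ?_
  rw [pow_eq_zero_of_le (by simpa using hi) h, smul_zero]

namespace Matrix

section Zero

variable {R : Type*} [Zero R]

theorem eta_fin_three_of_blockTriangular {S : Matrix (Fin 3) (Fin 3) R}
    (h : S.BlockTriangular id) :
    S = !![S 0 0, S 0 1, S 0 2; 0, S 1 1, S 1 2; 0, 0, S 2 2] := by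
  ext i j
  fin_cases i <;> fin_cases j <;> simp <;> exact h (by decide)

theorem blockTriangular_upper_fin_three (p q r α β γ : R) :
    (!![p, α, γ; 0, q, β; 0, 0, r]).BlockTriangular id := by
  intro i j hij
  fin_cases i <;> fin_cases j <;> simp_all

theorem strictUpper_fin_three_apply_of_le (α β γ : R) :
    ∀ i j : Fin 3, j ≤ i → !![0, α, γ; 0, 0, β; 0, 0, 0] i j = 0 := by
  intro i j hij
  fin_cases i <;> fin_cases j <;> simp_all

theorem upper_fin_three_inj {p q r α β γ p' q' r' α' β' γ' : R} :
    !![p, α, γ; 0, q, β; 0, 0, r] = !![p', α', γ'; 0, q', β'; 0, 0, r'] ↔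
      p = p' ∧ α = α' ∧ γ = γ' ∧ q = q' ∧ β = β' ∧ r = r' := by
  simp [and_assoc]

theorem upper_fin_three_nonneg_iff [PartialOrder R] {p q r α β γ : R} :
    (∀ i j, 0 ≤ !![p, α, γ; 0, q, β; 0, 0, r] i j) ↔
      0 ≤ p ∧ 0 ≤ α ∧ 0 ≤ γ ∧ 0 ≤ q ∧ 0 ≤ β ∧ 0 ≤ r := by
  simp [Fin.forall_fin_succ, and_assoc]

end Zero

section CommRing

variable {R : Type*} [CommRing R]

theorem upper_fin_three_sq (p q r α β γ : R) :
    !![p, α, γ; 0, q, β; 0, 0, r] ^ 2 =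
      !![p ^ 2, (p + q) * α, p * γ + α * β + γ * r; 0, q ^ 2, (q + r) * β; 0, 0, r ^ 2] := by
  ext i j
  fin_cases i <;> fin_cases j <;> simp [sq, mul_apply, Fin.sum_univ_three] <;> ring

theorem strictUpper_fin_three_pow_three (α β γ : R) :
    !![0, α, γ; 0, 0, β; 0, 0, 0] ^ 3 = 0 := by
  ext i j
  fin_cases i <;> fin_cases j <;> simp [pow_succ, mul_apply, Fin.sum_univ_three]

end CommRing

theorem sq_eq_unitriangular_fin_three_iff {K : Type*} [Field K] [LinearOrder K]
    [IsStrictOrderedRing K] {S : Matrix (Fin 3) (Fin 3) K} (hS : S.BlockTriangular id)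
    (hdiag : ∀ i, 0 ≤ S i i) (a b c : K) :
    S ^ 2 = !![1, a, c; 0, 1, b; 0, 0, 1] ↔
      S = !![1, a / 2, (c - a * b / 4) / 2; 0, 1, b / 2; 0, 0, 1] := by
  obtain ⟨p, q, r, α, β, γ, rfl⟩ : ∃ p q r α β γ, S = !![p, α, γ; 0, q, β; 0, 0, r] :=
    ⟨_, _, _, _, _, _, eta_fin_three_of_blockTriangular hS⟩
  rw [upper_fin_three_sq, upper_fin_three_inj, upper_fin_three_inj]
  constructor
  · rintro ⟨hp, rfl, rfl, hq, rfl, hr⟩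
    obtain rfl : p = 1 := (pow_eq_one_iff_of_nonneg (hdiag 0) two_ne_zero).1 hp
    obtain rfl : q = 1 := (pow_eq_one_iff_of_nonneg (hdiag 1) two_ne_zero).1 hq
    obtain rfl : r = 1 := (pow_eq_one_iff_of_nonneg (hdiag 2) two_ne_zero).1 hr
    refine ⟨rfl, ?_, ?_, rfl, ?_, rfl⟩ <;> ring
  · rintro ⟨rfl, rfl, rfl, rfl, rfl, rfl⟩
    refine ⟨?_, ?_, ?_, ?_, ?_, ?_⟩ <;> ring

section Exp

variable {𝕂 : Type*} [Field 𝕂] [CharZero 𝕂] [TopologicalSpace 𝕂] [IsTopologicalRing 𝕂]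

theorem exp_strictUpper_fin_three (α β γ : 𝕂) :
    exp !![0, α, γ; 0, 0, β; 0, 0, 0] = !![1, α, γ + α * β / 2; 0, 1, β; 0, 0, 1] := by
  rw [exp_eq_sum_range_of_pow_eq_zero (strictUpper_fin_three_pow_three α β γ)]
  ext i j
  fin_cases i <;> fin_cases j <;> simp [sum_range_succ, sq, Rat.smul_def]
  ring

theorem exp_eq_unitriangular_fin_three_iff {A : Matrix (Fin 3) (Fin 3) 𝕂}
    (hA : ∀ i j : Fin 3, j ≤ i → A i j = 0) (a b c : 𝕂) :
    exp A = !![1, a, c; 0, 1, b; 0, 0, 1] ↔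
      A = !![0, a, c - a * b / 2; 0, 0, b; 0, 0, 0] := by
  obtain ⟨α, β, γ, rfl⟩ : ∃ α β γ, A = !![0, α, γ; 0, 0, β; 0, 0, 0] := by
    refine ⟨A 0 1, A 1 2, A 0 2, ?_⟩
    ext i j
    fin_cases i <;> fin_cases j <;> simp <;> exact hA _ _ (by decide)
  rw [exp_strictUpper_fin_three, upper_fin_three_inj, upper_fin_three_inj]
  constructor <;> rintro ⟨-, rfl, rfl, -, rfl, -⟩ <;> simp

end Exp

end Matrix

open Matrix

theorem stmt_19_general (a b c : ℝ) (ha : 0 ≤ a) (hb : 0 ≤ b)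
    (T : Matrix (Fin 3) (Fin 3) ℝ)
    (hT : T = !![1, a, c; 0, 1, b; 0, 0, 1]) :
    ((∃ S : Matrix (Fin 3) (Fin 3) ℝ,
        (∀ i j, 0 ≤ S i j) ∧ (∀ i j : Fin 3, (j : ℕ) < (i : ℕ) → S i j = 0) ∧
        S ^ 2 = T) ↔ a * b / 4 ≤ c) ∧
    ((∃ A : Matrix (Fin 3) (Fin 3) ℝ,
        (∀ i j, 0 ≤ A i j) ∧ (∀ i j : Fin 3, (j : ℕ) ≤ (i : ℕ) → A i j = 0) ∧
        NormedSpace.exp A = T) ↔ a * b / 2 ≤ c) := by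
  subst hT
  refine ⟨⟨?_, fun h => ?_⟩, ⟨?_, fun h => ?_⟩⟩
  · rintro ⟨S, hS, hupper, hsq⟩
    -- `<` on `Fin 3` is `<` on the values, so `hupper` is `S.BlockTriangular id` by definition.
    obtain rfl := (sq_eq_unitriangular_fin_three_iff hupper (fun i => hS i i) a b c).1 hsq
    have hcorner : 0 ≤ (c - a * b / 4) / 2 := hS 0 2
    linarith
  · have hnonneg :
        ∀ i j, 0 ≤ !![(1 : ℝ), a / 2, (c - a * b / 4) / 2; 0, 1, b / 2; 0, 0, 1] i j :=
      upper_fin_three_nonneg_iff.2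
        ⟨zero_le_one, by positivity, by linarith, zero_le_one, by positivity, zero_le_one⟩
    have hupper := blockTriangular_upper_fin_three (1 : ℝ) 1 1 (a / 2) (b / 2) ((c - a * b / 4) / 2)
    exact ⟨_, hnonneg, hupper,
      (sq_eq_unitriangular_fin_three_iff hupper (fun i => hnonneg i i) a b c).2 rfl⟩
  · rintro ⟨A, hA, hstrict, hexp⟩
    obtain rfl := (exp_eq_unitriangular_fin_three_iff hstrict a b c).1 hexp
    have hcorner : 0 ≤ c - a * b / 2 := hA 0 2
    linarith
  · exact ⟨_, upper_fin_three_nonneg_iff.2 ⟨le_rfl, ha, by linarith, le_rfl, hb, le_rfl⟩,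
      strictUpper_fin_three_apply_of_le a b (c - a * b / 2),
      (exp_eq_unitriangular_fin_three_iff (strictUpper_fin_three_apply_of_le _ _ _) a b c).2 rfl⟩

/-- Let `T = [[1,a,c],[0,1,b],[0,0,1]]` with `a, b, c ≥ 0`. Then `T` has an entrywise
nonnegative upper triangular square root iff `c ≥ ab/4`, and `T = exp A` for some
entrywise nonnegative strictly upper triangular matrix `A` (i.e. `T` embeds into the
positive semigroup `(exp (tA))_{t ≥ 0}`) iff `c ≥ ab/2`. -/
theorem stmt_19 (a b c : ℝ) (ha : 0 ≤ a) (hb : 0 ≤ b) (hc : 0 ≤ c)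
    (T : Matrix (Fin 3) (Fin 3) ℝ)
    (hT : T = !![1, a, c; 0, 1, b; 0, 0, 1]) :
    ((∃ S : Matrix (Fin 3) (Fin 3) ℝ,
        (∀ i j, 0 ≤ S i j) ∧ (∀ i j : Fin 3, (j : ℕ) < (i : ℕ) → S i j = 0) ∧
        S ^ 2 = T) ↔ a * b / 4 ≤ c) ∧
    ((∃ A : Matrix (Fin 3) (Fin 3) ℝ,
        (∀ i j, 0 ≤ A i j) ∧ (∀ i j : Fin 3, (j : ℕ) ≤ (i : ℕ) → A i j = 0) ∧
        NormedSpace.exp A = T) ↔ a * b / 2 ≤ c) :=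
  stmt_19_general a b c ha hb T hT
end
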